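/- arXiv:math/0611361 — 9 statements merged into one kernel-verified Lean document; each statement's English description precedes it below -/
import Mathlib

section
/- Define c_1 = 1 and, for 2^j ≤ n < 2^{j+1}, set c_n = 2^{-2j} if j is even and c_n = 2^{-3j} if j is odd. Then the sequence {c_n} is a nonnegative null sequence belonging to NBVS: there is a constant K such that ∑_{k=m}^{2m}|c_k - c_{k+1}| ≤ K(c_m + c_{2m}) for all m ≥ 1. -/
/-!
The sequence is constant on the dyadic blocks `[2^j, 2^(j+1))`, so on `[m, 2m]` it jumps only
once, from the block of `m` to the block of `2m`. Hence the variation over `[m, 2m]` is the single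
jump `|c m - c (2m)| ≤ c m + c (2m)`, and `K = 1` works for any nonnegative block-constant sequence,
however irregular the block values `2^(-2j)`, `2^(-3j)` are.
-/

open Filter Topology Finset

section DyadicBlocks

variable {c v : ℕ → ℝ}

theorem eq_comp_log_of_dyadic (hc : ∀ j n : ℕ, 2 ^ j ≤ n → n < 2 ^ (j + 1) → c n = v j)
    {n : ℕ} (hn : n ≠ 0) : c n = v (Nat.log 2 n) :=
  hc _ n (Nat.pow_log_le_self 2 hn) (Nat.lt_pow_succ_log_self one_lt_two n)

theorem eq_succ_of_dyadic (hc : ∀ j n : ℕ, 2 ^ j ≤ n → n < 2 ^ (j + 1) → c n = v j)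
    {j k : ℕ} (hlo : 2 ^ j ≤ k) (hhi : k + 1 < 2 ^ (j + 2)) (hne : k + 1 ≠ 2 ^ (j + 1)) :
    c k = c (k + 1) := by
  have hpow : 2 ^ (j + 2) = 2 * 2 ^ (j + 1) := by rw [pow_succ, mul_comm]
  rcases lt_or_gt_of_ne hne with hlt | hgt
  · rw [hc j k hlo (by omega), hc j (k + 1) (by omega) hlt]
  · rw [hc (j + 1) k (by omega) (by omega), hc (j + 1) (k + 1) (by omega) (by omega)]

theorem tendsto_of_dyadic (hc : ∀ j n : ℕ, 2 ^ j ≤ n → n < 2 ^ (j + 1) → c n = v j) {l : ℝ}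
    (hv : Tendsto v atTop (𝓝 l)) : Tendsto c atTop (𝓝 l) := by
  have hlog : Tendsto (Nat.log 2) atTop atTop :=
    tendsto_atTop_atTop.2 fun j => ⟨2 ^ j, fun n hn => Nat.le_log_of_pow_le one_lt_two hn⟩
  refine (hv.comp hlog).congr' ?_
  filter_upwards [eventually_ne_atTop 0] with n hn
  exact (eq_comp_log_of_dyadic hc hn).symm

/-- The only nonzero term of the sum is the jump at `k + 1 = 2 ^ (log₂ m + 1)`. -/
theorem sum_Icc_abs_sub_le_of_dyadic (hc : ∀ j n : ℕ, 2 ^ j ≤ n → n < 2 ^ (j + 1) → c n = v j)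
    (hv : ∀ j, 0 ≤ v j) {m : ℕ} (hm : m ≠ 0) :
    ∑ k ∈ Icc m (2 * m), |c k - c (k + 1)| ≤ c m + c (2 * m) := by
  set j := Nat.log 2 m
  have hlo : 2 ^ j ≤ m := Nat.pow_log_le_self 2 hm
  have hhi : m < 2 ^ (j + 1) := Nat.lt_pow_succ_log_self one_lt_two m
  have hpow : 2 ^ (j + 1) = 2 * 2 ^ j := by rw [pow_succ, mul_comm]
  have hpow' : 2 ^ (j + 2) = 2 * 2 ^ (j + 1) := by rw [pow_succ, mul_comm]
  have hsum : ∑ k ∈ Icc m (2 * m), |c k - c (k + 1)| = |c m - c (2 * m)| := by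
    rw [sum_eq_single_of_mem (2 ^ (j + 1) - 1) (mem_Icc.2 ⟨by omega, by omega⟩)]
    · rw [Nat.sub_add_cancel Nat.one_le_two_pow, hc j _ (by omega) (by omega),
        hc (j + 1) _ le_rfl (by omega), hc j m hlo hhi, hc (j + 1) (2 * m) (by omega) (by omega)]
    · intro k hk hne
      rw [mem_Icc] at hk
      rw [eq_succ_of_dyadic hc (j := j) (by omega) (by omega) (by omega), sub_self, abs_zero]
  have hnonneg : ∀ n, n ≠ 0 → 0 ≤ c n := fun n hn => eq_comp_log_of_dyadic hc hn ▸ hv _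
  rw [hsum]
  calc |c m - c (2 * m)| ≤ |c m| + |c (2 * m)| := abs_sub _ _
    _ = c m + c (2 * m) := by
      rw [abs_of_nonneg (hnonneg m hm), abs_of_nonneg (hnonneg _ (by omega))]

end DyadicBlocks

noncomputable def blockValue (j : ℕ) : ℝ :=
  if j % 2 = 0 then ((2 : ℝ) ^ (2 * j))⁻¹ else ((2 : ℝ) ^ (3 * j))⁻¹

theorem blockValue_nonneg (j : ℕ) : 0 ≤ blockValue j := by
  unfold blockValue
  split <;> positivity

theorem blockValue_le (j : ℕ) : blockValue j ≤ ((2 : ℝ) ^ j)⁻¹ := by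
  unfold blockValue
  split <;> exact inv_anti₀ (by positivity) (pow_le_pow_right₀ one_le_two (by omega))

theorem tendsto_blockValue : Tendsto blockValue atTop (𝓝 0) :=
  squeeze_zero blockValue_nonneg blockValue_le
    (tendsto_inv_atTop_zero.comp (tendsto_pow_atTop_atTop_of_one_lt one_lt_two))

theorem example_seq_in_nbvs (c : ℕ → ℝ)
    (hc : ∀ j n : ℕ, 2 ^ j ≤ n → n < 2 ^ (j + 1) →
      c n = if j % 2 = 0 then ((2 : ℝ) ^ (2 * j))⁻¹ else ((2 : ℝ) ^ (3 * j))⁻¹) :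
    (∀ n : ℕ, 1 ≤ n → 0 ≤ c n) ∧
    Tendsto c atTop (nhds 0) ∧
    ∃ K : ℝ, 0 < K ∧ ∀ m : ℕ, 1 ≤ m →
      ∑ k ∈ Finset.Icc m (2 * m), |c k - c (k + 1)| ≤ K * (c m + c (2 * m)) := by
  change ∀ j n : ℕ, 2 ^ j ≤ n → n < 2 ^ (j + 1) → c n = blockValue j at hc
  refine ⟨fun n hn => ?_, tendsto_of_dyadic hc tendsto_blockValue, 1, one_pos, fun m hm => ?_⟩
  · rw [eq_comp_log_of_dyadic hc (by omega)]
    exact blockValue_nonneg _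
  · rw [one_mul]
    exact sum_Icc_abs_sub_le_of_dyadic hc blockValue_nonneg (by omega)
end

section
/- Define c_1 = 1 and, for 2^j ≤ n < 2^{j+1}, set c_n = 2^{-2j} if j is even and c_n = 2^{-3j} if j is odd. Then {c_n} is not in GBVS: there is no constant K such that ∑_{k=m}^{2m}|c_k - c_{k+1}| ≤ K·c_m holds for all m ≥ 1. In fact, for m = 2^{2n+1} one has ∑_{k=m}^{2m}|Δc_k| ≥ m·c_m/8. -/
/-!
For `m = 2 ^ (2n+1)` the sequence is constant, equal to `2^-(6n+3)`, on the odd block `[m, 2m)`, and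
constant again on the even block starting at `2m`, so `∑_{k=m}^{2m} |Δc_k|` is the single jump at
`k = 2m - 1`, of size at least `2^-(4n+5) = m c_m / 8`. As `c_m > 0`, a bound `K c_m` would force
`K ≥ m / 8` for arbitrarily large `m`.
-/

open Finset Filter

def IsExampleSeq (c : ℕ → ℝ) : Prop :=
  ∀ j n : ℕ, 2 ^ j ≤ n → n < 2 ^ (j + 1) →
    c n = if j % 2 = 0 then ((2 : ℝ) ^ (2 * j))⁻¹ else ((2 : ℝ) ^ (3 * j))⁻¹

theorem sum_Icc_abs_sub_succ_eq_of_eqOn_Ico {c : ℕ → ℝ} {a b d : ℕ} {x y : ℝ}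
    (hab : a < b) (hbd : b ≤ d) (hx : ∀ k ∈ Ico a b, c k = x)
    (hy : ∀ k ∈ Icc b (d + 1), c k = y) :
    ∑ k ∈ Icc a d, |c k - c (k + 1)| = |x - y| := by
  rw [sum_eq_single_of_mem (b - 1) (mem_Icc.2 ⟨by omega, by omega⟩)]
  · rw [hx _ (mem_Ico.2 ⟨by omega, by omega⟩), Nat.sub_add_cancel (by omega),
      hy _ (mem_Icc.2 ⟨le_rfl, by omega⟩)]
  · intro k hk hne
    rw [mem_Icc] at hk
    rcases lt_or_ge k (b - 1) with h | h
    · rw [hx k (mem_Ico.2 ⟨by omega, by omega⟩), hx (k + 1) (mem_Ico.2 ⟨by omega, by omega⟩),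
        sub_self, abs_zero]
    · rw [hy k (mem_Icc.2 ⟨by omega, by omega⟩), hy (k + 1) (mem_Icc.2 ⟨by omega, by omega⟩),
        sub_self, abs_zero]

theorem inv_two_pow_succ_le_sub {a b : ℕ} (h : a < b) :
    ((2 : ℝ) ^ (a + 1))⁻¹ ≤ ((2 : ℝ) ^ a)⁻¹ - ((2 : ℝ) ^ b)⁻¹ := by
  have hb : ((2 : ℝ) ^ b)⁻¹ ≤ ((2 : ℝ) ^ (a + 1))⁻¹ :=
    inv_anti₀ (by positivity) (pow_le_pow_right₀ one_le_two h)
  have hsucc : ((2 : ℝ) ^ (a + 1))⁻¹ = ((2 : ℝ) ^ a)⁻¹ / 2 := by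
    rw [pow_succ, mul_inv, div_eq_mul_inv]
  linarith

theorem inv_two_pow_succ_min_le_abs_sub {a b : ℕ} (h : a ≠ b) :
    ((2 : ℝ) ^ (min a b + 1))⁻¹ ≤ |((2 : ℝ) ^ a)⁻¹ - ((2 : ℝ) ^ b)⁻¹| := by
  rcases h.lt_or_gt with h | h
  · rw [min_eq_left h.le]
    exact (inv_two_pow_succ_le_sub h).trans (le_abs_self _)
  · rw [min_eq_right h.le, abs_sub_comm]
    exact (inv_two_pow_succ_le_sub h).trans (le_abs_self _)

theorem not_exists_sum_abs_sub_succ_le_of_frequently {c : ℕ → ℝ} {C : ℝ} (hC : 0 < C)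
    (h : ∃ᶠ m in atTop, 0 < c m ∧ (m : ℝ) * c m / C ≤ ∑ k ∈ Icc m (2 * m), |c k - c (k + 1)|) :
    ¬ ∃ K : ℝ, ∀ m : ℕ, 1 ≤ m → ∑ k ∈ Icc m (2 * m), |c k - c (k + 1)| ≤ K * c m := by
  rintro ⟨K, hK⟩
  obtain ⟨m, hm, hcm, hlow⟩ := frequently_atTop.1 h (⌈K * C⌉₊ + 1)
  have hKm : K * C < m := Nat.lt_of_ceil_lt (by omega)
  have : (m : ℝ) * c m / C ≤ K * c m := hlow.trans (hK m (by omega))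
  rw [div_le_iff₀ hC] at this
  nlinarith

namespace IsExampleSeq

variable {c : ℕ → ℝ}

theorem apply_of_mem_odd_block (hc : IsExampleSeq c) {n k : ℕ}
    (hk : k ∈ Ico (2 ^ (2 * n + 1)) (2 * 2 ^ (2 * n + 1))) :
    c k = ((2 : ℝ) ^ (6 * n + 3))⁻¹ := by
  rw [mem_Ico, ← pow_succ'] at hk
  rw [hc (2 * n + 1) k hk.1 hk.2, if_neg (by omega)]
  ring_nf

theorem apply_of_mem_even_block (hc : IsExampleSeq c) {n k : ℕ}
    (hk : k ∈ Ico (2 * 2 ^ (2 * n + 1)) (4 * 2 ^ (2 * n + 1))) :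
    c k = ((2 : ℝ) ^ (4 * n + 4))⁻¹ := by
  have h4 : 4 * 2 ^ (2 * n + 1) = 2 ^ (2 * n + 2 + 1) := by ring
  rw [mem_Ico, ← pow_succ', h4] at hk
  rw [hc (2 * n + 2) k hk.1 hk.2, if_pos (by omega)]
  ring_nf

theorem apply_two_pow_odd (hc : IsExampleSeq c) (n : ℕ) :
    c (2 ^ (2 * n + 1)) = ((2 : ℝ) ^ (6 * n + 3))⁻¹ :=
  hc.apply_of_mem_odd_block (left_mem_Ico.2 (lt_two_mul_self (by positivity)))

theorem sum_abs_sub_succ_eq (hc : IsExampleSeq c) (n : ℕ) :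
    ∑ k ∈ Icc (2 ^ (2 * n + 1)) (2 * 2 ^ (2 * n + 1)), |c k - c (k + 1)| =
      |((2 : ℝ) ^ (6 * n + 3))⁻¹ - ((2 : ℝ) ^ (4 * n + 4))⁻¹| := by
  have hpos : 0 < 2 ^ (2 * n + 1) := by positivity
  refine sum_Icc_abs_sub_succ_eq_of_eqOn_Ico (by omega) le_rfl
    (fun k hk => hc.apply_of_mem_odd_block hk) (fun k hk => hc.apply_of_mem_even_block ?_)
  rw [mem_Icc] at hk
  rw [mem_Ico]
  omega

theorem le_sum_abs_sub_succ (hc : IsExampleSeq c) (n : ℕ) :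
    ((2 ^ (2 * n + 1) : ℕ) : ℝ) * c (2 ^ (2 * n + 1)) / 8 ≤
      ∑ k ∈ Icc (2 ^ (2 * n + 1)) (2 * 2 ^ (2 * n + 1)), |c k - c (k + 1)| := by
  have hm : (((2 ^ (2 * n + 1) : ℕ) : ℝ) * ((2 : ℝ) ^ (6 * n + 3))⁻¹ / 8) =
      ((2 : ℝ) ^ (4 * n + 5))⁻¹ := by
    push_cast
    field_simp
    ring
  rw [hc.sum_abs_sub_succ_eq, hc.apply_two_pow_odd, hm]
  -- the `min` covers `n = 0`, the only case where the jump goes up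
  calc ((2 : ℝ) ^ (4 * n + 5))⁻¹
      ≤ ((2 : ℝ) ^ (min (6 * n + 3) (4 * n + 4) + 1))⁻¹ :=
        inv_anti₀ (by positivity) (pow_le_pow_right₀ one_le_two (by omega))
    _ ≤ _ := inv_two_pow_succ_min_le_abs_sub (by omega)

theorem frequently_le_sum_abs_sub_succ (hc : IsExampleSeq c) :
    ∃ᶠ m in atTop, 0 < c m ∧ (m : ℝ) * c m / 8 ≤ ∑ k ∈ Icc m (2 * m), |c k - c (k + 1)| := by
  refine frequently_atTop.2 fun N => ⟨2 ^ (2 * N + 1), ?_, ?_, hc.le_sum_abs_sub_succ N⟩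
  · exact (Nat.lt_two_pow_self).le.trans (Nat.pow_le_pow_right two_pos (by omega))
  · rw [hc.apply_two_pow_odd]
    positivity

end IsExampleSeq

theorem example_seq_not_in_gbvs (c : ℕ → ℝ)
    (hc : ∀ j n : ℕ, 2 ^ j ≤ n → n < 2 ^ (j + 1) →
      c n = if j % 2 = 0 then ((2 : ℝ) ^ (2 * j))⁻¹ else ((2 : ℝ) ^ (3 * j))⁻¹) :
    (¬ ∃ K : ℝ, ∀ m : ℕ, 1 ≤ m →
      ∑ k ∈ Finset.Icc m (2 * m), |c k - c (k + 1)| ≤ K * c m) ∧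
    (∀ n : ℕ,
      ((2 ^ (2 * n + 1) : ℕ) : ℝ) * c (2 ^ (2 * n + 1)) / 8 ≤
        ∑ k ∈ Finset.Icc (2 ^ (2 * n + 1)) (2 * 2 ^ (2 * n + 1)), |c k - c (k + 1)|) :=
  have hc' : IsExampleSeq c := hc
  ⟨not_exists_sum_abs_sub_succ_le_of_frequently (by norm_num) hc'.frequently_le_sum_abs_sub_succ,
    hc'.le_sum_abs_sub_succ⟩
end

section
/- Let {c_n} be a nonnegative sequence in NBVS tending to zero, and suppose n·c_n → 0 as n → ∞. Then for every ε > 0 there is n_0 such that for all N ≥ n_0, ∑_{k=N}^{∞} |c_k - c_{k+1}| ≤ K·ε/N, where K depends only on the NBVS constant of {c_n}. In particular, N·∑_{k=N}^{∞}|Δc_k| → 0 as N → ∞. -/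
/-!
Once `|n c_n| ≤ ε` for `n ≥ N`, the NBVS inequality bounds the variation of `c` over each dyadic
block `[m, 2m)` with `m ≥ N` by `(3/2) |K| ε / m`. Cutting `[N, ∞)` into the blocks
`[2^j N, 2^(j+1) N)` and summing the geometric series gives `∑_{k ≥ N} |Δc_k| ≤ 3 |K| ε / N`.
-/

open Filter Finset Topology

section DyadicBlocks

variable {f : ℕ → ℝ} {B : ℝ} {N : ℕ}

theorem sum_Ico_two_pow_mul_le (hblock : ∀ m, N ≤ m → ∑ k ∈ Ico m (2 * m), f k ≤ B / m)
    (j : ℕ) : ∑ k ∈ Ico N (2 ^ j * N), f k ≤ 2 * B / N - 2 * B / (2 ^ j * N) := by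
  induction j with
  | zero => simp
  | succ j ih =>
    have hN : N ≤ 2 ^ j * N := Nat.le_mul_of_pos_left N (by positivity)
    have hblock_j := hblock _ hN
    rw [← mul_assoc, ← pow_succ'] at hblock_j
    push_cast at hblock_j
    rw [← sum_Ico_consecutive f hN (by rw [pow_succ]; nlinarith)]
    calc _ ≤ (2 * B / N - 2 * B / (2 ^ j * N)) + B / (2 ^ j * N) := add_le_add ih hblock_j
      _ = _ := by rw [pow_succ]; ring

theorem tsum_nat_add_le_of_dyadic_block_le (hf : ∀ k, 0 ≤ f k) (hB : 0 ≤ B) (hN : 1 ≤ N)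
    (hblock : ∀ m, N ≤ m → ∑ k ∈ Ico m (2 * m), f k ≤ B / m) :
    ∑' k, f (N + k) ≤ 2 * B / N := by
  refine Real.tsum_le_of_sum_range_le (fun k => hf _) fun m => ?_
  have hm : N + m ≤ 2 ^ m * N := by
    have := Nat.lt_two_pow_self (n := m)
    nlinarith
  calc ∑ k ∈ range m, f (N + k) = ∑ k ∈ Ico N (N + m), f k := by
        rw [sum_Ico_eq_sum_range, Nat.add_sub_cancel_left]
    _ ≤ ∑ k ∈ Ico N (2 ^ m * N), f k :=
      sum_le_sum_of_subset_of_nonneg (Ico_subset_Ico_right hm) fun k _ _ => hf k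
    _ ≤ 2 * B / N - 2 * B / (2 ^ m * N) := sum_Ico_two_pow_mul_le hblock m
    _ ≤ 2 * B / N := sub_le_self _ (by positivity)

end DyadicBlocks

section NBVS

variable {c : ℕ → ℝ} {K ε : ℝ} {N : ℕ}

theorem abs_le_div_of_abs_mul_le {n : ℕ} (hn : 1 ≤ n) (h : |(n : ℝ) * c n| ≤ ε) :
    |c n| ≤ ε / n := by
  have hn : (0 : ℝ) < n := by exact_mod_cast hn
  rwa [le_div_iff₀ hn, mul_comm, ← abs_of_pos hn, ← abs_mul]

theorem nbvs_dyadic_block_le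
    (hNBVS : ∀ m : ℕ, 1 ≤ m →
      ∑ k ∈ Icc m (2 * m), |c k - c (k + 1)| ≤ K * (c m + c (2 * m)))
    (hN : 1 ≤ N) (hsmall : ∀ n, N ≤ n → |(n : ℝ) * c n| ≤ ε) {m : ℕ} (hm : N ≤ m) :
    ∑ k ∈ Ico m (2 * m), |c k - c (k + 1)| ≤ 3 / 2 * |K| * ε / m := by
  have hm1 : 1 ≤ m := hN.trans hm
  have hcm := abs_le_div_of_abs_mul_le hm1 (hsmall m hm)
  have hc2m := abs_le_div_of_abs_mul_le (by omega) (hsmall (2 * m) (by omega))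
  push_cast at hc2m
  calc ∑ k ∈ Ico m (2 * m), |c k - c (k + 1)|
      ≤ ∑ k ∈ Icc m (2 * m), |c k - c (k + 1)| :=
        sum_le_sum_of_subset_of_nonneg Ico_subset_Icc_self fun _ _ _ => abs_nonneg _
    _ ≤ K * (c m + c (2 * m)) := hNBVS m hm1
    _ ≤ |K| * (|c m| + |c (2 * m)|) :=
        (le_abs_self _).trans <| by rw [abs_mul]; gcongr; exact abs_add_le _ _
    _ ≤ |K| * (ε / m + ε / (2 * m)) := by gcongr
    _ = 3 / 2 * |K| * ε / m := by ring

theorem nbvs_tsum_tail_le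
    (hNBVS : ∀ m : ℕ, 1 ≤ m →
      ∑ k ∈ Icc m (2 * m), |c k - c (k + 1)| ≤ K * (c m + c (2 * m)))
    (hε : 0 ≤ ε) (hN : 1 ≤ N) (hsmall : ∀ n, N ≤ n → |(n : ℝ) * c n| ≤ ε) :
    ∑' k, |c (N + k) - c (N + k + 1)| ≤ 3 * |K| * ε / N := by
  have := tsum_nat_add_le_of_dyadic_block_le (f := fun k => |c k - c (k + 1)|)
    (fun _ => abs_nonneg _) (by positivity) hN fun m hm => nbvs_dyadic_block_le hNBVS hN hsmall hm
  convert this using 2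
  ring

end NBVS

theorem tendsto_natCast_mul_nhds_zero_of_le_div {u : ℕ → ℝ} {C : ℝ} (hu : ∀ N, 0 ≤ u N)
    (h : ∀ ε : ℝ, 0 < ε → ∃ n₀ : ℕ, 1 ≤ n₀ ∧ ∀ N : ℕ, n₀ ≤ N → u N ≤ C * ε / N) :
    Tendsto (fun N : ℕ => (N : ℝ) * u N) atTop (𝓝 0) := by
  refine tendsto_order.2 ⟨fun a ha => Eventually.of_forall fun N =>
    ha.trans_le (mul_nonneg N.cast_nonneg (hu N)), fun a ha => ?_⟩
  obtain ⟨ε, hε, hCε⟩ := exists_pos_mul_lt ha C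
  obtain ⟨n₀, hn₀, hle⟩ := h ε hε
  filter_upwards [eventually_ge_atTop n₀] with N hN
  have hN0 : (0 : ℝ) < N := by exact_mod_cast hn₀.trans hN
  calc (N : ℝ) * u N ≤ N * (C * ε / N) := by gcongr; exact hle N hN
    _ = C * ε := by field_simp
    _ < a := hCε

theorem nbvs_tail_variation_small_general (c : ℕ → ℝ) (K : ℝ)
    (hNBVS : ∀ m : ℕ, 1 ≤ m →
      ∑ k ∈ Finset.Icc m (2 * m), |c k - c (k + 1)| ≤ K * (c m + c (2 * m)))
    (hlim : Tendsto (fun n : ℕ => (n : ℝ) * c n) atTop (nhds 0)) :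
    ∃ K' : ℝ, 0 < K' ∧
      (∀ ε : ℝ, 0 < ε → ∃ n₀ : ℕ, 1 ≤ n₀ ∧ ∀ N : ℕ, n₀ ≤ N →
        ∑' k : ℕ, |c (N + k) - c (N + k + 1)| ≤ K' * ε / N) ∧
      Tendsto (fun N : ℕ => (N : ℝ) * ∑' k : ℕ, |c (N + k) - c (N + k + 1)|)
        atTop (nhds 0) := by
  have hbound : ∀ ε : ℝ, 0 < ε → ∃ n₀ : ℕ, 1 ≤ n₀ ∧ ∀ N : ℕ, n₀ ≤ N →
      ∑' k : ℕ, |c (N + k) - c (N + k + 1)| ≤ (3 * |K| + 1) * ε / N := by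
    intro ε hε
    obtain ⟨n₁, hn₁⟩ := eventually_atTop.1 <|
      (tendsto_zero_iff_abs_tendsto_zero _).1 hlim |>.eventually (eventually_le_nhds hε)
    refine ⟨max n₁ 1, le_max_right _ _, fun N hN => ?_⟩
    calc _ ≤ 3 * |K| * ε / N := nbvs_tsum_tail_le hNBVS hε.le (le_of_max_le_right hN)
          fun n hn => hn₁ n ((le_max_left _ _).trans (hN.trans hn))
      _ ≤ (3 * |K| + 1) * ε / N := by gcongr; linarith
  exact ⟨3 * |K| + 1, by positivity, hbound,
    tendsto_natCast_mul_nhds_zero_of_le_div (fun _ => tsum_nonneg fun _ => abs_nonneg _) hbound⟩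

theorem nbvs_tail_variation_small (c : ℕ → ℝ) (hpos : ∀ n, 0 ≤ c n) (K : ℝ)
    (hNBVS : ∀ m : ℕ, 1 ≤ m →
      ∑ k ∈ Finset.Icc m (2 * m), |c k - c (k + 1)| ≤ K * (c m + c (2 * m)))
    (hlim : Tendsto (fun n : ℕ => (n : ℝ) * c n) atTop (nhds 0)) :
    ∃ K' : ℝ, 0 < K' ∧
      (∀ ε : ℝ, 0 < ε → ∃ n₀ : ℕ, 1 ≤ n₀ ∧ ∀ N : ℕ, n₀ ≤ N →
        ∑' k : ℕ, |c (N + k) - c (N + k + 1)| ≤ K' * ε / N) ∧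
      Tendsto (fun N : ℕ => (N : ℝ) * ∑' k : ℕ, |c (N + k) - c (N + k + 1)|)
        atTop (nhds 0) :=
  nbvs_tail_variation_small_general c K hNBVS hlim
end

section
/- Let {b_n} be a nonnegative sequence in NBVS with lim_{n→∞} n·b_n = 0. Then the sine series ∑_{n=1}^{∞} b_n sin(nx) converges uniformly on ℝ. -/
/-!
Suppose `k * b k ≤ ε` for all `k ≥ m`. Applied to the dyadic blocks `[a, 2a]`, `a ≥ m`, the NBVS
condition sums to `∑_{k ≥ m} |b k - b (k+1)| ≤ 3Kε/m`. By periodicity and oddness it suffices to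
bound the block `∑_{k=m}^n b k sin (k x)` for `0 < x ≤ π`. The terms with `k ≤ π/x` contribute at
most `πε` because `|sin (k x)| ≤ k x`. For `k > π/x`, Abel summation against the partial sums of
`sin (k x)`, which are bounded by `1 / sin (x/2) ≤ π/x`, gives at most `(1 + 3K)ε`. Hence the
partial sums are uniformly Cauchy.
-/

open Filter Finset Real

def IsNBVS (b : ℕ → ℝ) (K : ℝ) : Prop :=
  ∀ m : ℕ, 1 ≤ m → ∑ n ∈ Icc m (2 * m), |b n - b (n + 1)| ≤ K * (b m + b (2 * m))

section Abel

variable {𝕜 E : Type*} [NormedField 𝕜] [SeminormedAddCommGroup E] [NormedSpace 𝕜 E]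

lemma sum_Icc_by_parts (f : ℕ → 𝕜) (g : ℕ → E) {p q : ℕ} (hpq : p ≤ q) :
    ∑ k ∈ Icc p q, f k • g k =
      f q • ∑ j ∈ Icc p q, g j + ∑ k ∈ Ico p q, (f k - f (k + 1)) • ∑ j ∈ Icc p k, g j := by
  induction q, hpq using Nat.le_induction with
  | base => simp
  | succ q hpq ih =>
    rw [sum_Icc_succ_top (by omega), ih, sum_Ico_succ_top hpq, sum_Icc_succ_top (by omega),
      smul_add, sub_smul]
    abel

lemma norm_sum_Icc_smul_le (f : ℕ → 𝕜) (g : ℕ → E) {p q : ℕ} (hpq : p ≤ q) {B : ℝ}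
    (hB : ∀ k, ‖∑ j ∈ Icc p k, g j‖ ≤ B) :
    ‖∑ k ∈ Icc p q, f k • g k‖ ≤ B * (‖f q‖ + ∑ k ∈ Ico p q, ‖f k - f (k + 1)‖) := by
  rw [sum_Icc_by_parts f g hpq, mul_add, mul_sum]
  refine (norm_add_le _ _).trans (add_le_add ?_ ((norm_sum_le _ _).trans (sum_le_sum ?_)))
  · rw [norm_smul, mul_comm]
    exact mul_le_mul_of_nonneg_right (hB q) (norm_nonneg _)
  · intro k _
    rw [norm_smul, mul_comm]
    exact mul_le_mul_of_nonneg_right (hB k) (norm_nonneg _)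

end Abel

lemma sum_Icc_eq_sum_Icc_min_add_sum_Icc_max {M : Type*} [AddCommMonoid M] (f : ℕ → M)
    (m n N : ℕ) :
    ∑ k ∈ Icc m n, f k = ∑ k ∈ Icc m (min n N), f k + ∑ k ∈ Icc (max m (N + 1)) n, f k := by
  have hlow : (Icc m n).filter (· ≤ N) = Icc m (min n N) := by
    ext k; simp only [mem_filter, mem_Icc]; omega
  have hhigh : (Icc m n).filter (fun k => ¬k ≤ N) = Icc (max m (N + 1)) n := by
    ext k; simp only [mem_filter, mem_Icc]; omega
  rw [← sum_filter_add_sum_filter_not (Icc m n) (· ≤ N), hlow, hhigh]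

lemma sum_Icc_le_of_sum_Icc_two_mul_le {v : ℕ → ℝ} {C : ℝ} {m : ℕ} (hm : 0 < m)
    (hv : ∀ k, 0 ≤ v k) (hC : 0 ≤ C) (hblock : ∀ a, m ≤ a → ∑ k ∈ Icc a (2 * a), v k ≤ C / a)
    (n : ℕ) : ∑ k ∈ Icc m n, v k ≤ 2 * C / m := by
  have dyadic : ∀ j : ℕ, ∑ k ∈ Ico m (2 ^ j * m), v k ≤ 2 * C / m - 2 * C / (2 ^ j * m) := by
    intro j
    induction j with
    | zero => simp
    | succ j ih =>
      have hdouble : 2 ^ (j + 1) * m = 2 * (2 ^ j * m) := by ring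
      have hma : m ≤ 2 ^ j * m := Nat.le_mul_of_pos_left m (by positivity)
      have hlast : ∑ k ∈ Ico (2 ^ j * m) (2 * (2 ^ j * m)), v k ≤ C / (2 ^ j * m) := by
        calc _ ≤ ∑ k ∈ Icc (2 ^ j * m) (2 * (2 ^ j * m)), v k :=
              sum_le_sum_of_subset_of_nonneg Ico_subset_Icc_self (fun k _ _ => hv k)
          _ ≤ C / (2 ^ j * m) := by exact_mod_cast hblock _ hma
      calc _ = ∑ k ∈ Ico m (2 ^ j * m), v k + ∑ k ∈ Ico (2 ^ j * m) (2 * (2 ^ j * m)), v k := by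
            rw [hdouble, sum_Ico_consecutive v hma (by omega)]
        _ ≤ 2 * C / m - 2 * C / (2 ^ j * m) + C / (2 ^ j * m) := add_le_add ih hlast
        _ = 2 * C / m - 2 * C / (2 ^ (j + 1) * m) := by rw [pow_succ]; ring
  have hn : n < 2 ^ n * m := Nat.lt_two_pow_self.trans_le (Nat.le_mul_of_pos_right _ hm)
  calc ∑ k ∈ Icc m n, v k ≤ ∑ k ∈ Ico m (2 ^ n * m), v k :=
        sum_le_sum_of_subset_of_nonneg (fun k hk => by simp only [mem_Ico, mem_Icc] at hk ⊢; omega)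
          (fun k _ _ => hv k)
    _ ≤ 2 * C / m - 2 * C / (2 ^ n * m) := dyadic n
    _ ≤ 2 * C / m := sub_le_self _ (by positivity)

lemma IsNBVS.sum_Icc_abs_sub_le {b : ℕ → ℝ} {K : ℝ} (hb : IsNBVS b K) (hK : 0 ≤ K) {ε : ℝ}
    (hε : 0 ≤ ε) {m : ℕ} (hm : 0 < m) (hbε : ∀ k, m ≤ k → k * b k ≤ ε) (n : ℕ) :
    ∑ k ∈ Icc m n, |b k - b (k + 1)| ≤ 3 * K * ε / m := by
  have hdecay : ∀ k, m ≤ k → b k ≤ ε / k := fun k hk =>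
    (le_div_iff₀' (by exact_mod_cast hm.trans_le hk)).2 (hbε k hk)
  have hblock : ∀ a, m ≤ a → ∑ k ∈ Icc a (2 * a), |b k - b (k + 1)| ≤ 3 * K * ε / 2 / a := by
    intro a ha
    calc _ ≤ K * (b a + b (2 * a)) := hb a (hm.trans_le ha)
      _ ≤ K * (ε / a + ε / (2 * a)) := by
          gcongr
          · exact hdecay a ha
          · exact_mod_cast hdecay (2 * a) (by omega)
      _ = 3 * K * ε / 2 / a := by field_simp; ring
  calc _ ≤ 2 * (3 * K * ε / 2) / m :=
        sum_Icc_le_of_sum_Icc_two_mul_le hm (fun _ => abs_nonneg _) (by positivity) hblock n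
    _ = 3 * K * ε / m := by ring

lemma two_mul_sin_half_mul_sin_nat_mul (x : ℝ) (k : ℕ) :
    2 * sin (x / 2) * sin (k * x) = cos ((k - 1 / 2) * x) - cos ((↑(k + 1) - 1 / 2) * x) := by
  rw [cos_sub_cos]
  push_cast
  rw [show ((k - 1 / 2) * x + (k + 1 - 1 / 2) * x) / 2 = k * x by ring,
    show ((k - 1 / 2) * x - (k + 1 - 1 / 2) * x) / 2 = -(x / 2) by ring, sin_neg]
  ring

lemma abs_sin_half_mul_abs_sum_Icc_sin_le (x : ℝ) (p q : ℕ) :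
    |sin (x / 2)| * |∑ k ∈ Icc p q, sin (k * x)| ≤ 1 := by
  rcases lt_or_ge q p with hqp | hpq
  · simp [Icc_eq_empty_of_lt hqp]
  set c : ℕ → ℝ := fun k => cos ((k - 1 / 2) * x)
  have htelescope : 2 * sin (x / 2) * ∑ k ∈ Icc p q, sin (k * x) = c p - c (q + 1) := by
    rw [mul_sum, sum_congr rfl fun k _ => two_mul_sin_half_mul_sin_nat_mul x k,
      ← neg_sub (c (q + 1)), ← sum_Icc_sub hpq c, ← sum_neg_distrib]
    simp only [neg_sub, c]
  have hc : ∀ k, |c k| ≤ 1 := fun k => abs_cos_le_one _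
  have := congrArg abs htelescope
  rw [abs_mul, abs_mul, abs_two] at this
  linarith [abs_sub (c p) (c (q + 1)), hc p, hc (q + 1)]

lemma abs_sum_Icc_sin_le_pi_div {x : ℝ} (hx : 0 < x) (hxπ : x ≤ π) (p q : ℕ) :
    |∑ k ∈ Icc p q, sin (k * x)| ≤ π / x := by
  have hjordan : x / π ≤ sin (x / 2) := by
    have := mul_le_sin (x := x / 2) (by positivity) (by linarith)
    rwa [show 2 / π * (x / 2) = x / π by ring] at this
  have hsin : 0 < sin (x / 2) := (div_pos hx pi_pos).trans_le hjordan
  have := abs_sin_half_mul_abs_sum_Icc_sin_le x p q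
  rw [abs_of_pos hsin] at this
  rw [le_div_iff₀ hx]
  calc _ = π * (x / π * |∑ k ∈ Icc p q, sin (k * x)|) := by
        rw [← mul_assoc, mul_div_cancel₀ x pi_ne_zero, mul_comm]
    _ ≤ π * 1 := by gcongr; exact (mul_le_mul_of_nonneg_right hjordan (abs_nonneg _)).trans this
    _ = π := mul_one π

lemma abs_sum_mul_sin_le_card_mul {b : ℕ → ℝ} (hpos : ∀ n, 0 ≤ b n) {ε x : ℝ} (hx : 0 ≤ x)
    {s : Finset ℕ} (hbε : ∀ k ∈ s, k * b k ≤ ε) :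
    |∑ k ∈ s, b k * sin (k * x)| ≤ #s * (ε * x) := by
  have hterm : ∀ k ∈ s, |b k * sin (k * x)| ≤ ε * x := fun k hk => by
    calc |b k * sin (k * x)| = b k * |sin (k * x)| := by rw [abs_mul, abs_of_nonneg (hpos k)]
      _ ≤ b k * (k * x) := by
          gcongr
          · exact hpos k
          · exact (abs_sin_le_abs).trans (abs_of_nonneg (by positivity)).le
      _ = k * b k * x := by ring
      _ ≤ ε * x := by gcongr; exact hbε k hk
  calc _ ≤ ∑ k ∈ s, |b k * sin (k * x)| := abs_sum_le_sum_abs _ _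
    _ ≤ ∑ _k ∈ s, ε * x := sum_le_sum hterm
    _ = #s * (ε * x) := by rw [sum_const, nsmul_eq_mul]

lemma abs_sum_Icc_mul_sin_le_of_pi_div_le {b : ℕ → ℝ} {K : ℝ} (hpos : ∀ n, 0 ≤ b n)
    (hb : IsNBVS b K) (hK : 0 ≤ K) {ε : ℝ} (hε : 0 ≤ ε) {p : ℕ} (hp : 0 < p)
    (hbε : ∀ k, p ≤ k → k * b k ≤ ε) {x : ℝ} (hx : 0 < x) (hxπ : x ≤ π) (hpx : π / x ≤ p)
    (n : ℕ) : |∑ k ∈ Icc p n, b k * sin (k * x)| ≤ (1 + 3 * K) * ε := by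
  rcases lt_or_ge n p with hnp | hpn
  · simp [Icc_eq_empty_of_lt hnp]; positivity
  have hp0 : (0 : ℝ) < p := by exact_mod_cast hp
  have hbn : b n ≤ ε / p := by
    rw [le_div_iff₀' hp0]
    calc p * b n ≤ n * b n := by gcongr; exact hpos n
      _ ≤ ε := hbε n hpn
  have hvar : ∑ k ∈ Ico p n, |b k - b (k + 1)| ≤ 3 * K * ε / p :=
    (sum_le_sum_of_subset_of_nonneg Ico_subset_Icc_self fun _ _ _ => abs_nonneg _).trans
      (hb.sum_Icc_abs_sub_le hK hε hp hbε n)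
  calc |∑ k ∈ Icc p n, b k * sin (k * x)|
      ≤ π / x * (|b n| + ∑ k ∈ Ico p n, |b k - b (k + 1)|) :=
        norm_sum_Icc_smul_le b (fun k => sin (k * x)) hpn (abs_sum_Icc_sin_le_pi_div hx hxπ p)
    _ ≤ π / x * (ε / p + 3 * K * ε / p) := by
        rw [abs_of_nonneg (hpos n)]; gcongr
    _ = π / x / p * ((1 + 3 * K) * ε) := by ring
    _ ≤ 1 * ((1 + 3 * K) * ε) := by
        gcongr
        exact (div_le_one hp0).2 hpx
    _ = (1 + 3 * K) * ε := one_mul _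

lemma abs_sum_Icc_mul_sin_le_of_mem_Icc {b : ℕ → ℝ} {K : ℝ} (hpos : ∀ n, 0 ≤ b n)
    (hb : IsNBVS b K) (hK : 0 ≤ K) {ε : ℝ} (hε : 0 ≤ ε) {m : ℕ} (hm : 0 < m)
    (hbε : ∀ k, m ≤ k → k * b k ≤ ε) (n : ℕ) {x : ℝ} (hx : x ∈ Set.Icc 0 π) :
    |∑ k ∈ Icc m n, b k * sin (k * x)| ≤ (π + 1 + 3 * K) * ε := by
  obtain ⟨hx0, hxπ⟩ := hx
  rcases hx0.eq_or_lt with rfl | hx0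
  · simp; positivity
  set N := ⌊π / x⌋₊
  have hNx : N * x ≤ π := (le_div_iff₀ hx0).1 (Nat.floor_le (by positivity))
  have hhead : |∑ k ∈ Icc m (min n N), b k * sin (k * x)| ≤ π * ε := by
    have hcard : (#(Icc m (min n N)) : ℝ) ≤ N := by
      rw [Nat.card_Icc]; exact_mod_cast (by omega : min n N + 1 - m ≤ N)
    calc _ ≤ #(Icc m (min n N)) * (ε * x) :=
          abs_sum_mul_sin_le_card_mul hpos hx0.le fun k hk => hbε k (mem_Icc.1 hk).1
      _ ≤ N * (ε * x) := by gcongr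
      _ = ε * (N * x) := by ring
      _ ≤ ε * π := by gcongr
      _ = π * ε := mul_comm ε π
  have htail : |∑ k ∈ Icc (max m (N + 1)) n, b k * sin (k * x)| ≤ (1 + 3 * K) * ε := by
    refine abs_sum_Icc_mul_sin_le_of_pi_div_le hpos hb hK hε (by omega)
      (fun k hk => hbε k (le_of_max_le_left hk)) hx0 hxπ ?_ n
    calc π / x ≤ N + 1 := (Nat.lt_floor_add_one _).le
      _ ≤ max m (N + 1) := by exact_mod_cast le_max_right m (N + 1)
  rw [sum_Icc_eq_sum_Icc_min_add_sum_Icc_max _ m n N]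
  calc _ ≤ _ := abs_add_le _ _
    _ ≤ π * ε + (1 + 3 * K) * ε := add_le_add hhead htail
    _ = (π + 1 + 3 * K) * ε := by ring

lemma Function.Periodic.norm_le_of_odd {E : Type*} [SeminormedAddCommGroup E] {g : ℝ → E}
    {c : ℝ} (hc : 0 < c) (hper : g.Periodic c) (hodd : g.Odd) {C : ℝ}
    (h : ∀ x ∈ Set.Icc 0 (c / 2), ‖g x‖ ≤ C) (x : ℝ) : ‖g x‖ ≤ C := by
  obtain ⟨y, ⟨hy0, hyc⟩, hxy⟩ := hper.exists_mem_Ico₀ hc x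
  rw [hxy]
  rcases le_or_gt y (c / 2) with hy | hy
  · exact h y ⟨hy0, hy⟩
  · rw [← hper.sub_eq, ← neg_sub, hodd, norm_neg]
    exact h (c - y) ⟨by linarith, by linarith⟩

lemma abs_sum_Icc_mul_sin_le {b : ℕ → ℝ} {K : ℝ} (hpos : ∀ n, 0 ≤ b n)
    (hb : IsNBVS b K) (hK : 0 ≤ K) {ε : ℝ} (hε : 0 ≤ ε) {m : ℕ} (hm : 0 < m)
    (hbε : ∀ k, m ≤ k → k * b k ≤ ε) (n : ℕ) (x : ℝ) :
    |∑ k ∈ Icc m n, b k * sin (k * x)| ≤ (π + 1 + 3 * K) * ε := by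
  have hper : Function.Periodic (fun x => ∑ k ∈ Icc m n, b k * sin (k * x)) (2 * π) := by
    intro x
    simp only [mul_add, sin_add_nat_mul_two_pi]
  have hodd : Function.Odd (fun x => ∑ k ∈ Icc m n, b k * sin (k * x)) := by
    intro x
    simp only [mul_neg, sin_neg, sum_neg_distrib]
  refine hper.norm_le_of_odd two_pi_pos hodd (fun y hy => ?_) x
  rw [mul_div_cancel_left₀ π two_ne_zero] at hy
  exact abs_sum_Icc_mul_sin_le_of_mem_Icc hpos hb hK hε hm hbε n hy

lemma IsNBVS.eventually_abs_sum_Icc_mul_sin_le {b : ℕ → ℝ} {K : ℝ} (hpos : ∀ n, 0 ≤ b n)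
    (hb : IsNBVS b K) (hK : 0 ≤ K) (hlim : Tendsto (fun n : ℕ => (n : ℝ) * b n) atTop (nhds 0))
    {δ : ℝ} (hδ : 0 < δ) :
    ∀ᶠ m in atTop, ∀ n x, |∑ k ∈ Icc m n, b k * sin (k * x)| ≤ δ := by
  have hC : 0 < π + 1 + 3 * K := by positivity
  obtain ⟨M, hM⟩ := eventually_atTop.1 (hlim.eventually (ge_mem_nhds (div_pos hδ hC)))
  filter_upwards [eventually_ge_atTop (max M 1)] with m hm n x
  calc _ ≤ (π + 1 + 3 * K) * (δ / (π + 1 + 3 * K)) :=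
        abs_sum_Icc_mul_sin_le hpos hb hK (by positivity) (by omega)
          (fun k hk => hM k (by omega)) n x
    _ = δ := mul_div_cancel₀ δ hC.ne'

theorem nbvs_sine_series_uniform_convergence (b : ℕ → ℝ) (hpos : ∀ n, 0 ≤ b n)
    (K : ℝ) (hK : 0 < K)
    (hNBVS : ∀ m : ℕ, 1 ≤ m →
      ∑ n ∈ Finset.Icc m (2 * m), |b n - b (n + 1)| ≤ K * (b m + b (2 * m)))
    (hlim : Tendsto (fun n : ℕ => (n : ℝ) * b n) atTop (nhds 0)) :
    ∃ f : ℝ → ℝ, TendstoUniformly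
      (fun (n : ℕ) (x : ℝ) => ∑ k ∈ Finset.Icc 1 n, b k * Real.sin (k * x))
      f atTop := by
  set S : ℕ → ℝ → ℝ := fun n x => ∑ k ∈ Icc 1 n, b k * sin (k * x)
  have hS : UniformCauchySeqOn S atTop Set.univ := by
    rw [Metric.uniformCauchySeqOn_iff]
    intro δ hδ
    obtain ⟨M, hM⟩ := eventually_atTop.1
      ((show IsNBVS b K from hNBVS).eventually_abs_sum_Icc_mul_sin_le hpos hK.le hlim (half_pos hδ))
    refine ⟨M, fun i hi j hj x _ => ?_⟩
    wlog hij : i ≤ j generalizing i j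
    · rw [dist_comm]; exact this j hj i hi (le_of_not_ge hij)
    have hdiff : S j x - S i x = ∑ k ∈ Icc (i + 1) j, b k * sin (k * x) := by
      have hIoc : ∀ n, Icc 1 n = Ioc 0 n := fun n => Icc_add_one_left_eq_Ioc 0 n
      simp only [S, hIoc, Icc_add_one_left_eq_Ioc i j]
      rw [← sum_Ioc_consecutive _ (Nat.zero_le i) hij, add_sub_cancel_left]
    rw [dist_comm, Real.dist_eq, hdiff]
    exact (hM (i + 1) (by omega) j x).trans_lt (half_lt_self hδ)
  choose f hf using fun x => cauchySeq_tendsto_of_complete (hS.cauchySeq (Set.mem_univ x))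
  exact ⟨f, tendstoUniformlyOn_univ.1 (hS.tendstoUniformlyOn_of_tendsto fun x _ => hf x)⟩
end

section
/- Let {b_n} be a nonnegative sequence in NBVS. If the sine series ∑_{n=1}^{∞} b_n sin(nx) converges uniformly on ℝ, then lim_{n→∞} n·b_n = 0. -/
/-!
At `x = π / (4m)` every `sin (k x)` with `m ≤ k ≤ 2m` is at least `1/2`, so the uniform Cauchy
property of the sine series forces the block sums `∑_{m ≤ k ≤ 2m} b k` to tend to `0`. For `s`
about `t / 2`, the numbers `b m + b (2m)` with `s ≤ m ≤ t` add up to at most two block sums, so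
the smallest of them is `O(1/t)` times those block sums; the NBVS inequality on `[m, 2m] ∋ t`
bounds `b t` by a constant times that smallest value.
-/

open Filter Topology Finset

def IsNBVSWith (K : ℝ) (b : ℕ → ℝ) : Prop :=
  ∀ m : ℕ, 1 ≤ m → ∑ n ∈ Icc m (2 * m), |b n - b (n + 1)| ≤ K * (b m + b (2 * m))

def dyadicBlockSum (b : ℕ → ℝ) (m : ℕ) : ℝ :=
  ∑ k ∈ Icc m (2 * m), b k

lemma Finset.sum_Icc_one_sub_sum_Icc_one {M : Type*} [AddCommGroup M] (g : ℕ → M) {m n : ℕ}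
    (hm : 1 ≤ m) (hmn : m ≤ n + 1) :
    ∑ k ∈ Icc 1 n, g k - ∑ k ∈ Icc 1 (m - 1), g k = ∑ k ∈ Icc m n, g k := by
  obtain ⟨j, rfl⟩ := Nat.exists_eq_add_of_le' hm
  have hIoc (a b : ℕ) : Icc (a + 1) b = Ioc a b := Icc_add_one_left_eq_Ioc a b
  rw [sub_eq_iff_eq_add', Nat.add_sub_cancel, hIoc, hIoc, hIoc]
  exact (sum_Ioc_consecutive g (Nat.zero_le j) (by omega : j ≤ n)).symm

lemma Finset.exists_card_mul_le_sum {ι : Type*} {s : Finset ι} (hs : s.Nonempty)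
    (g : ι → ℝ) :
    ∃ i ∈ s, #s * g i ≤ ∑ j ∈ s, g j := by
  obtain ⟨i, hi, hmin⟩ := s.exists_min_image g hs
  exact ⟨i, hi, by simpa using s.card_nsmul_le_sum g (g i) hmin⟩

lemma one_half_le_sin_natCast_mul {m k : ℕ} (hm : 0 < m) (hk : k ∈ Icc m (2 * m)) :
    1 / 2 ≤ Real.sin (k * (Real.pi / (4 * m))) := by
  obtain ⟨hmk, hk2m⟩ := mem_Icc.1 hk
  have hm' : (0 : ℝ) < m := by exact_mod_cast hm
  have hlow : Real.pi / 4 ≤ k * (Real.pi / (4 * m)) := by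
    rw [mul_div_assoc', le_div_iff₀ (by positivity)]
    have : (m : ℝ) ≤ k := by exact_mod_cast hmk
    nlinarith [Real.pi_pos]
  have hupp : k * (Real.pi / (4 * m)) ≤ Real.pi / 2 := by
    rw [mul_div_assoc', div_le_iff₀ (by positivity)]
    have : (k : ℝ) ≤ 2 * m := by exact_mod_cast hk2m
    nlinarith [Real.pi_pos]
  calc 1 / 2 ≤ Real.sin (Real.pi / 4) := by
        rw [Real.sin_pi_div_four]
        nlinarith [Real.sq_sqrt (show (0 : ℝ) ≤ 2 by norm_num), Real.sqrt_nonneg 2]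
    _ ≤ _ := Real.sin_le_sin_of_le_of_le_pi_div_two (by linarith [Real.pi_pos]) hupp hlow

lemma dyadicBlockSum_le_two_mul_sum_mul_sin {b : ℕ → ℝ} (hb : ∀ n, 0 ≤ b n) {m : ℕ}
    (hm : 0 < m) :
    dyadicBlockSum b m ≤
      2 * ∑ k ∈ Icc m (2 * m), b k * Real.sin (k * (Real.pi / (4 * m))) := by
  rw [dyadicBlockSum, mul_sum]
  refine sum_le_sum fun k hk => ?_
  nlinarith [one_half_le_sin_natCast_mul hm hk, hb k]

theorem tendsto_dyadicBlockSum_of_tendstoUniformly {b : ℕ → ℝ} (hb : ∀ n, 0 ≤ b n)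
    {f : ℝ → ℝ}
    (hf : TendstoUniformly (fun n x => ∑ k ∈ Icc 1 n, b k * Real.sin (k * x)) f atTop) :
    Tendsto (dyadicBlockSum b) atTop (𝓝 0) := by
  have hcauchy :=
    Metric.uniformCauchySeqOn_iff.1 (tendstoUniformlyOn_univ.2 hf).uniformCauchySeqOn
  rw [Metric.tendsto_atTop]
  intro ε hε
  obtain ⟨N, hN⟩ := hcauchy (ε / 2) (half_pos hε)
  refine ⟨N + 1, fun m hm => ?_⟩
  set x := Real.pi / (4 * m)
  have hblock : |∑ k ∈ Icc m (2 * m), b k * Real.sin (k * x)| < ε / 2 := by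
    rw [← sum_Icc_one_sub_sum_Icc_one _ (by omega) (by omega), ← Real.dist_eq]
    exact hN _ (by omega) _ (by omega) x (Set.mem_univ x)
  have hnonneg : 0 ≤ dyadicBlockSum b m := sum_nonneg fun k _ => hb k
  rw [Real.dist_eq, sub_zero, abs_of_nonneg hnonneg]
  linarith [dyadicBlockSum_le_two_mul_sum_mul_sin hb (show 0 < m by omega), le_abs_self
    (∑ k ∈ Icc m (2 * m), b k * Real.sin (k * x))]

lemma IsNBVSWith.le_one_add_abs_mul {K : ℝ} {b : ℕ → ℝ} (hNBVS : IsNBVSWith K b)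
    (hb : ∀ n, 0 ≤ b n) {m t : ℕ} (hm : 1 ≤ m) (hmt : m ≤ t) (ht : t ≤ 2 * m) :
    b t ≤ (1 + |K|) * (b m + b (2 * m)) := by
  have hvar : |b m - b t| ≤ K * (b m + b (2 * m)) := by
    calc |b m - b t| ≤ ∑ n ∈ Ico m t, |b n - b (n + 1)| := by
          simpa only [Real.dist_eq] using dist_le_Ico_sum_dist b hmt
      _ ≤ ∑ n ∈ Icc m (2 * m), |b n - b (n + 1)| :=
          sum_le_sum_of_subset_of_nonneg (Ico_subset_Icc_self.trans (Icc_subset_Icc_right ht))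
            fun _ _ _ => abs_nonneg _
      _ ≤ _ := hNBVS m hm
  have hK : K * (b m + b (2 * m)) ≤ |K| * (b m + b (2 * m)) :=
    mul_le_mul_of_nonneg_right (le_abs_self K) (add_nonneg (hb m) (hb (2 * m)))
  linarith [neg_abs_le (b m - b t), hb (2 * m)]

lemma sum_Icc_add_two_mul_le_dyadicBlockSum {b : ℕ → ℝ} (hb : ∀ n, 0 ≤ b n) {s t : ℕ}
    (ht : t ≤ 2 * s) :
    ∑ m ∈ Icc s t, (b m + b (2 * m)) ≤ dyadicBlockSum b s + dyadicBlockSum b (2 * s) := by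
  rw [sum_add_distrib]
  refine add_le_add
    (sum_le_sum_of_subset_of_nonneg (Icc_subset_Icc_right ht) fun k _ _ => hb k) ?_
  rw [← sum_image (f := b) (g := (2 * ·)) fun _ _ _ _ h => by simpa using h]
  refine sum_le_sum_of_subset_of_nonneg ?_ fun k _ _ => hb k
  intro k hk
  obtain ⟨m, hm, rfl⟩ := mem_image.1 hk
  simp only [mem_Icc] at hm ⊢
  omega

lemma IsNBVSWith.natCast_mul_le {K : ℝ} {b : ℕ → ℝ} (hNBVS : IsNBVSWith K b)
    (hb : ∀ n, 0 ≤ b n) {t : ℕ} (ht : 1 ≤ t) :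
    t * b t ≤
      2 * (1 + |K|) * (dyadicBlockSum b ((t + 1) / 2) + dyadicBlockSum b (2 * ((t + 1) / 2))) := by
  set s := (t + 1) / 2
  have hst : s ≤ t := by omega
  have hts : t ≤ 2 * s := by omega
  obtain ⟨m, hm, hmin⟩ := exists_card_mul_le_sum (nonempty_Icc.2 hst) fun m => b m + b (2 * m)
  obtain ⟨hsm, hmt⟩ := mem_Icc.1 hm
  have hcard : (t : ℝ) ≤ 2 * #(Icc s t) := by
    rw [Nat.card_Icc]
    exact_mod_cast (by omega : t ≤ 2 * (t + 1 - s))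
  have hβ : 0 ≤ b m + b (2 * m) := add_nonneg (hb m) (hb (2 * m))
  have hbt := hNBVS.le_one_add_abs_mul hb (by omega) hmt (by omega)
  calc (t : ℝ) * b t ≤ t * ((1 + |K|) * (b m + b (2 * m))) := by gcongr
    _ = (1 + |K|) * (t * (b m + b (2 * m))) := by ring
    _ ≤ (1 + |K|) * (2 * #(Icc s t) * (b m + b (2 * m))) := by gcongr
    _ ≤ (1 + |K|) * (2 * (dyadicBlockSum b s + dyadicBlockSum b (2 * s))) := by
        rw [mul_assoc 2]; gcongr; exact hmin.trans (sum_Icc_add_two_mul_le_dyadicBlockSum hb hts)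
    _ = _ := by ring

theorem nbvs_sine_series_uniform_convergence_necessary_general (b : ℕ → ℝ)
    (hpos : ∀ n, 0 ≤ b n) (K : ℝ)
    (hNBVS : ∀ m : ℕ, 1 ≤ m →
      ∑ n ∈ Finset.Icc m (2 * m), |b n - b (n + 1)| ≤ K * (b m + b (2 * m)))
    (hconv : ∃ f : ℝ → ℝ, TendstoUniformly
      (fun (n : ℕ) (x : ℝ) => ∑ k ∈ Finset.Icc 1 n, b k * Real.sin (k * x))
      f atTop) :
    Tendsto (fun n : ℕ => (n : ℝ) * b n) atTop (nhds 0) := by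
  obtain ⟨f, hf⟩ := hconv
  have hblock := tendsto_dyadicBlockSum_of_tendstoUniformly hpos hf
  have hhalf : Tendsto (fun t : ℕ => (t + 1) / 2) atTop atTop :=
    tendsto_atTop_mono (fun t => by omega) (Nat.tendsto_div_const_atTop two_ne_zero)
  have hdouble : Tendsto (fun t : ℕ => 2 * ((t + 1) / 2)) atTop atTop :=
    tendsto_atTop_mono (fun t => by omega) hhalf
  have hbound := ((hblock.comp hhalf).add (hblock.comp hdouble)).const_mul (2 * (1 + |K|))
  rw [add_zero, mul_zero] at hbound
  refine tendsto_of_tendsto_of_tendsto_of_le_of_le' tendsto_const_nhds hbound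
    (Eventually.of_forall fun t => mul_nonneg t.cast_nonneg (hpos t)) ?_
  exact eventually_atTop.2 ⟨1, fun t ht => IsNBVSWith.natCast_mul_le hNBVS hpos ht⟩

theorem nbvs_sine_series_uniform_convergence_necessary (b : ℕ → ℝ)
    (hpos : ∀ n, 0 ≤ b n) (K : ℝ) (hK : 0 < K)
    (hNBVS : ∀ m : ℕ, 1 ≤ m →
      ∑ n ∈ Finset.Icc m (2 * m), |b n - b (n + 1)| ≤ K * (b m + b (2 * m)))
    (hconv : ∃ f : ℝ → ℝ, TendstoUniformly
      (fun (n : ℕ) (x : ℝ) => ∑ k ∈ Finset.Icc 1 n, b k * Real.sin (k * x))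
      f atTop) :
    Tendsto (fun n : ℕ => (n : ℝ) * b n) atTop (nhds 0) :=
  nbvs_sine_series_uniform_convergence_necessary_general b hpos K hNBVS hconv
end

section
/- Let {c_n} be a nonnegative sequence in NBVS. Then ∑_{k=n}^{2n} |c_k - c_{k+1}|·log(k) = O( max_{n ≤ k ≤ 2n} c_k·log(k) ) uniformly in n ≥ 2; i.e., there is a constant K' depending only on the NBVS constant such that ∑_{k=n}^{2n}|Δc_k| log k ≤ K' max_{n≤k≤2n} c_k log k for all n ≥ 2. -/
open Finset Real

lemma Real.log_two_mul_le_two_mul_log {x : ℝ} (hx : 2 ≤ x) : log (2 * x) ≤ 2 * log x := by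
  rw [log_mul two_ne_zero (by linarith)]
  linarith [log_le_log two_pos hx]

lemma sum_Icc_mul_log_le {f : ℕ → ℝ} (hf : ∀ k, 0 ≤ f k) {n m : ℕ} (hn : 0 < n) :
    ∑ k ∈ Icc n m, f k * log k ≤ (∑ k ∈ Icc n m, f k) * log m := by
  rw [sum_mul]
  refine sum_le_sum fun k hk => mul_le_mul_of_nonneg_left ?_ (hf k)
  obtain ⟨hnk, hkm⟩ := mem_Icc.mp hk
  exact log_le_log (by exact_mod_cast hn.trans_le hnk) (by exact_mod_cast hkm)

/-- The factor `3` arises because the left endpoint is compared via `log (2n) ≤ 2 log n`. -/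
lemma endpoints_mul_log_le_three_mul_sup' {c : ℕ → ℝ} {n : ℕ} (hn : 2 ≤ n) (hc : 0 ≤ c n)
    (h : (Icc n (2 * n)).Nonempty) :
    (c n + c (2 * n)) * log ((2 * n : ℕ) : ℝ) ≤
      3 * (Icc n (2 * n)).sup' h (fun k => c k * log k) := by
  have hn_le : c n * log n ≤ (Icc n (2 * n)).sup' h (fun k => c k * log k) :=
    le_sup' (fun k => c k * log k) (mem_Icc.mpr ⟨le_rfl, by omega⟩)
  have h2n_le : c (2 * n) * log ((2 * n : ℕ) : ℝ) ≤
      (Icc n (2 * n)).sup' h (fun k => c k * log k) :=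
    le_sup' (fun k => c k * log k) (mem_Icc.mpr ⟨by omega, le_rfl⟩)
  have hlog : log ((2 * n : ℕ) : ℝ) ≤ 2 * log n := by
    push_cast
    exact log_two_mul_le_two_mul_log (by exact_mod_cast hn)
  have hlog_n : 0 ≤ log (n : ℝ) := log_nonneg (by exact_mod_cast (by omega : 1 ≤ n))
  nlinarith [mul_le_mul_of_nonneg_left hlog hc]

theorem nbvs_log_weighted_variation (c : ℕ → ℝ) (hpos : ∀ n, 0 ≤ c n) (K : ℝ)
    (hNBVS : ∀ m : ℕ, 1 ≤ m →
      ∑ k ∈ Finset.Icc m (2 * m), |c k - c (k + 1)| ≤ K * (c m + c (2 * m))) :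
    ∃ K' : ℝ, 0 < K' ∧ ∀ n : ℕ, 2 ≤ n →
      ∑ k ∈ Finset.Icc n (2 * n), |c k - c (k + 1)| * Real.log k ≤
        K' * (Finset.Icc n (2 * n)).sup' (Finset.nonempty_Icc.mpr (by omega))
          (fun k => c k * Real.log k) := by
  refine ⟨3 * max K 1, by positivity, fun n hn => ?_⟩
  have hc : 0 ≤ c n + c (2 * n) := add_nonneg (hpos n) (hpos (2 * n))
  calc ∑ k ∈ Icc n (2 * n), |c k - c (k + 1)| * log k
      ≤ (∑ k ∈ Icc n (2 * n), |c k - c (k + 1)|) * log ((2 * n : ℕ) : ℝ) :=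
        sum_Icc_mul_log_le (fun _ => abs_nonneg _) (by omega)
    _ ≤ max K 1 * (c n + c (2 * n)) * log ((2 * n : ℕ) : ℝ) := by
        gcongr
        exact (hNBVS n (by omega)).trans (by gcongr; exact le_max_left K 1)
    _ ≤ 3 * max K 1 * (Icc n (2 * n)).sup' (nonempty_Icc.mpr (by omega))
          (fun k => c k * log k) := by
        rw [mul_assoc, mul_comm 3, mul_assoc]
        exact mul_le_mul_of_nonneg_left (endpoints_mul_log_le_three_mul_sup' hn (hpos n) _)
          (by positivity)
end

section
/- Let {c_n}_{n≥0} be a nonnegative sequence in NBVS with constant K, and fix n ≥ 1. If k_0 satisfies 2n+1 ≤ k_0 ≤ 4n, then k_0·c_{k_0} ≤ K'·( max_{1 ≤ k ≤ n} k·c_{n+k} + 4n·c_{4n} ), where K' depends only on K. -/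
/-!
Telescoping from `2n` to `k₀` stays inside the window `[2n, 4n]` of the NBVS condition at
`m = 2n`, so `c k₀ ≤ c (2n) + K (c (2n) + c (4n))`. Multiplying by `k₀ ≤ 4n` and noting that
`n c (2n)` is the `k = n` term of the maximum gives the bound with `K' = 4 (|K| + 1)`.
-/

open Finset

lemma abs_sub_le_of_nbvs_window {c : ℕ → ℝ} {K : ℝ} {m j : ℕ}
    (hm : ∑ k ∈ Icc m (2 * m), |c k - c (k + 1)| ≤ K * (c m + c (2 * m)))
    (hmj : m ≤ j) (hj : j ≤ 2 * m + 1) :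
    |c j - c m| ≤ K * (c m + c (2 * m)) := by
  have htel : |c j - c m| ≤ ∑ k ∈ Ico m j, |c k - c (k + 1)| := by
    simpa only [Real.dist_eq, abs_sub_comm (c j)] using dist_le_Ico_sum_dist c hmj
  have hsub : Ico m j ⊆ Icc m (2 * m) := fun x hx => by
    simp only [mem_Ico, mem_Icc] at hx ⊢
    omega
  exact htel.trans <| (sum_le_sum_of_subset_of_nonneg hsub fun _ _ _ => abs_nonneg _).trans hm

lemma le_of_nbvs_window {c : ℕ → ℝ} (hpos : ∀ n, 0 ≤ c n) {K : ℝ} {m j : ℕ}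
    (hm : ∑ k ∈ Icc m (2 * m), |c k - c (k + 1)| ≤ K * (c m + c (2 * m)))
    (hmj : m ≤ j) (hj : j ≤ 2 * m + 1) :
    c j ≤ (1 + |K|) * c m + |K| * c (2 * m) := by
  have hdiff := (le_abs_self _).trans (abs_sub_le_of_nbvs_window hm hmj hj)
  have hK : K * (c m + c (2 * m)) ≤ |K| * (c m + c (2 * m)) :=
    mul_le_mul_of_nonneg_right (le_abs_self K) (add_nonneg (hpos m) (hpos (2 * m)))
  linarith

theorem nbvs_middle_range_bound (c : ℕ → ℝ) (hpos : ∀ n, 0 ≤ c n) (K : ℝ)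
    (hNBVS : ∀ m : ℕ, 1 ≤ m →
      ∑ k ∈ Finset.Icc m (2 * m), |c k - c (k + 1)| ≤ K * (c m + c (2 * m))) :
    ∃ K' : ℝ, 0 < K' ∧ ∀ n : ℕ, ∀ hn : 1 ≤ n, ∀ k₀ : ℕ,
      2 * n + 1 ≤ k₀ → k₀ ≤ 4 * n →
      (k₀ : ℝ) * c k₀ ≤
        K' * ((Finset.Icc 1 n).sup' (Finset.nonempty_Icc.mpr hn)
          (fun k => (k : ℝ) * c (n + k)) + (4 * n : ℕ) * c (4 * n)) := by
  refine ⟨4 * (|K| + 1), by positivity, fun n hn k₀ hk₀ hk₀' => ?_⟩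
  set M := (Icc 1 n).sup' (nonempty_Icc.mpr hn) fun k => (k : ℝ) * c (n + k)
  have hM : (n : ℝ) * c (2 * n) ≤ M := by
    rw [two_mul]
    exact le_sup' (fun k : ℕ => (k : ℝ) * c (n + k)) (mem_Icc.mpr ⟨hn, le_rfl⟩)
  have hck₀ : c k₀ ≤ (1 + |K|) * c (2 * n) + |K| * c (4 * n) := by
    have := le_of_nbvs_window hpos (hNBVS (2 * n) (by omega)) (j := k₀) (by omega) (by omega)
    rwa [← mul_assoc, show (2 : ℕ) * 2 = 4 from rfl] at this
  have hk₀4n : (k₀ : ℝ) ≤ 4 * n := by exact_mod_cast hk₀'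
  have h4n : 0 ≤ 4 * (n : ℝ) * c (4 * n) := mul_nonneg (by positivity) (hpos _)
  calc (k₀ : ℝ) * c k₀ ≤ 4 * n * ((1 + |K|) * c (2 * n) + |K| * c (4 * n)) :=
        mul_le_mul hk₀4n hck₀ (hpos k₀) (by positivity)
    _ = 4 * (|K| + 1) * (n * c (2 * n)) + |K| * (4 * n * c (4 * n)) := by ring
    _ ≤ 4 * (|K| + 1) * M + 4 * (|K| + 1) * (4 * n * c (4 * n)) := by
        gcongr
        linarith [abs_nonneg K]
    _ = 4 * (|K| + 1) * (M + ((4 * n : ℕ) : ℝ) * c (4 * n)) := by push_cast; ring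
end

section
/- Let {a_k} be a nonnegative sequence in NBVS with constant K, and let k_0 ≥ 1. Then for every j with k_0/2 + 1 < j ≤ k_0, a_{k_0} ≤ (K+1)(a_j + a_{2j}), and consequently k_0·a_{k_0} ≤ 4(K+1) ∑_{j=⌊k_0/2⌋+1}^{∞} a_j. -/
/-!
Between `j` and `n ≤ 2j + 1` the sequence can climb by at most its variation over `[j, 2j]`,
so the NBVS condition gives `a n ≤ (K + 1)(a j + a (2j))` for every `j ∈ [n/2 + 1, n]`.
Summing over these `⌈n/2⌉` indices, the terms `a j` and `a (2j)` range over disjoint sets of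
indices `> n/2`, so `n a n ≤ 2 (K + 1) ∑_{i > n/2} a i`.
-/

open scoped ENNReal
open Finset
open ENNReal (ofReal)

def NBVS (K : ℝ) (a : ℕ → ℝ) : Prop :=
  ∀ m : ℕ, 1 ≤ m → ∑ k ∈ Icc m (2 * m), |a k - a (k + 1)| ≤ K * (a m + a (2 * m))

theorem ENNReal.sum_le_tsum_nat_add (f : ℕ → ℝ≥0∞) {N : ℕ} {F : Finset ℕ}
    (hF : ∀ n ∈ F, N ≤ n) : ∑ n ∈ F, f n ≤ ∑' i, f (N + i) := by
  have hinj : Function.Injective fun n : F ↦ (n : ℕ) - N := by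
    rintro ⟨x, hx⟩ ⟨y, hy⟩ hxy
    have := hF x hx
    have := hF y hy
    simp only [Subtype.mk.injEq] at hxy ⊢
    omega
  calc ∑ n ∈ F, f n = ∑' n : F, f (N + ((n : ℕ) - N)) := by
        rw [← Finset.tsum_subtype]
        exact tsum_congr fun ⟨n, hn⟩ ↦ by rw [Nat.add_sub_cancel' (hF n hn)]
    _ ≤ ∑' i, f (N + i) := ENNReal.tsum_comp_le_tsum_of_injective hinj fun i ↦ f (N + i)

theorem ENNReal.sum_Icc_add_two_mul_le_tsum (f : ℕ → ℝ≥0∞) {N M : ℕ} (hM : M < 2 * N) :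
    ∑ j ∈ Icc N M, (f j + f (2 * j)) ≤ ∑' i, f (N + i) := by
  have hdisj : Disjoint (Icc N M) ((Icc N M).image (2 * ·)) := by
    simp only [disjoint_left, mem_Icc, mem_image]
    omega
  have hinj : Set.InjOn (2 * ·) (Icc N M : Set ℕ) := fun x _ y _ h ↦ by simp only at h; omega
  rw [sum_add_distrib, ← sum_image (f := f) hinj, ← sum_union hdisj]
  refine sum_le_tsum_nat_add f fun n hn ↦ ?_
  simp only [mem_union, mem_Icc, mem_image] at hn
  omega

namespace NBVS

variable {K : ℝ} {a : ℕ → ℝ}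

theorem sub_le_mul_add (h : NBVS K a) {j n : ℕ} (hj : 1 ≤ j) (hjn : j ≤ n)
    (hn : n ≤ 2 * j + 1) : a n - a j ≤ K * (a j + a (2 * j)) :=
  calc a n - a j ≤ dist (a j) (a n) := by rw [Real.dist_eq, abs_sub_comm]; exact le_abs_self _
    _ ≤ ∑ k ∈ Ico j n, dist (a k) (a (k + 1)) := dist_le_Ico_sum_dist a hjn
    _ ≤ ∑ k ∈ Icc j (2 * j), |a k - a (k + 1)| := by
        simp only [Real.dist_eq]
        refine sum_le_sum_of_subset_of_nonneg (fun k hk ↦ ?_) fun _ _ _ ↦ abs_nonneg _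
        simp only [mem_Ico, mem_Icc] at hk ⊢
        omega
    _ ≤ K * (a j + a (2 * j)) := h j hj

theorem le_mul_add (h : NBVS K a) (hpos : ∀ n, 0 ≤ a n) {j n : ℕ} (hj : 1 ≤ j)
    (hjn : j ≤ n) (hn : n ≤ 2 * j + 1) : a n ≤ (K + 1) * (a j + a (2 * j)) := by
  linarith [h.sub_le_mul_add hj hjn hn, hpos (2 * j)]

theorem natCast_mul_le_two_mul_tsum (h : NBVS K a) (hpos : ∀ n, 0 ≤ a n) (n : ℕ) :
    n * ofReal (a n) ≤ 2 * ofReal (K + 1) * ∑' i, ofReal (a (n / 2 + 1 + i)) := by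
  set S := Icc (n / 2 + 1) n
  have hterm : ∀ j ∈ S,
      ofReal (a n) ≤ ofReal (K + 1) * (ofReal (a j) + ofReal (a (2 * j))) := by
    intro j hj
    rw [mem_Icc] at hj
    rw [← ENNReal.ofReal_add (hpos _) (hpos _),
      ← ENNReal.ofReal_mul' (add_nonneg (hpos _) (hpos _))]
    exact ENNReal.ofReal_le_ofReal (h.le_mul_add hpos (by omega) hj.2 (by omega))
  have hcard : (n : ℝ≥0∞) ≤ 2 * #S := by
    norm_cast
    rw [Nat.card_Icc]
    omega
  calc (n : ℝ≥0∞) * ofReal (a n) ≤ 2 * ∑ _j ∈ S, ofReal (a n) := by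
        rw [sum_const, nsmul_eq_mul, ← mul_assoc]
        gcongr
    _ ≤ 2 * ∑ j ∈ S, ofReal (K + 1) * (ofReal (a j) + ofReal (a (2 * j))) := by
        gcongr with j hj
        exact hterm j hj
    _ ≤ 2 * ofReal (K + 1) * ∑' i, ofReal (a (n / 2 + 1 + i)) := by
        rw [← mul_sum, ← mul_assoc]
        gcongr
        exact ENNReal.sum_Icc_add_two_mul_le_tsum _ (by omega)

end NBVS

theorem nbvs_tail_sum_control_general (a : ℕ → ℝ) (hpos : ∀ n, 0 ≤ a n) (K : ℝ)
    (hNBVS : ∀ m : ℕ, 1 ≤ m →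
      ∑ k ∈ Finset.Icc m (2 * m), |a k - a (k + 1)| ≤ K * (a m + a (2 * m)))
    (k₀ : ℕ) :
    (∀ j : ℕ, (k₀ : ℝ) / 2 + 1 < j → j ≤ k₀ → a k₀ ≤ (K + 1) * (a j + a (2 * j))) ∧
    (k₀ : ℝ≥0∞) * ENNReal.ofReal (a k₀) ≤
      ENNReal.ofReal (4 * (K + 1)) * ∑' j : ℕ, ENNReal.ofReal (a (k₀ / 2 + 1 + j)) := by
  have h : NBVS K a := hNBVS
  refine ⟨fun j hj hjk ↦ ?_, ?_⟩
  · have : k₀ < 2 * j := by exact_mod_cast (by linarith : (k₀ : ℝ) < 2 * j)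
    exact h.le_mul_add hpos (by omega) hjk (by omega)
  · calc (k₀ : ℝ≥0∞) * ENNReal.ofReal (a k₀)
        ≤ 2 * ENNReal.ofReal (K + 1) * ∑' i, ENNReal.ofReal (a (k₀ / 2 + 1 + i)) :=
          h.natCast_mul_le_two_mul_tsum hpos k₀
      _ ≤ ENNReal.ofReal (4 * (K + 1)) * ∑' i, ENNReal.ofReal (a (k₀ / 2 + 1 + i)) := by
          rw [ENNReal.ofReal_mul (by norm_num), ENNReal.ofReal_ofNat]
          gcongr
          norm_num

theorem nbvs_tail_sum_control (a : ℕ → ℝ) (hpos : ∀ n, 0 ≤ a n) (K : ℝ)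
    (hNBVS : ∀ m : ℕ, 1 ≤ m →
      ∑ k ∈ Finset.Icc m (2 * m), |a k - a (k + 1)| ≤ K * (a m + a (2 * m)))
    (k₀ : ℕ) (hk₀ : 1 ≤ k₀) :
    (∀ j : ℕ, (k₀ : ℝ) / 2 + 1 < j → j ≤ k₀ → a k₀ ≤ (K + 1) * (a j + a (2 * j))) ∧
    (k₀ : ℝ≥0∞) * ENNReal.ofReal (a k₀) ≤
      ENNReal.ofReal (4 * (K + 1)) * ∑' j : ℕ, ENNReal.ofReal (a (k₀ / 2 + 1 + j)) :=
  nbvs_tail_sum_control_general a hpos K hNBVS k₀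
end

section
/- If {a_k} is a nonnegative sequence in NBVS and ∑_{k=1}^{∞} a_k < ∞, then sup_{k ≥ 2n+1} k·a_k ≤ K·∑_{k = n+1}^{∞} a_k for all n ≥ 1, where K depends only on the NBVS constant; in particular k·a_k → 0. -/
open Filter Finset

/-!
For `k ≥ 2n + 1` choose `m ∈ [⌈k/2⌉, k]` minimising `a m + a (2m)`. Since `[m, k) ⊆ [m, 2m]`,
the NBVS condition at `m` bounds the variation of `a` from `m` to `k`, so
`a k ≤ (1 + K) (a m + a (2m))`. On the other hand the interval `[⌈k/2⌉, k]` has about `k/2`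
elements, all `> n`, so `(k/2) (a m + a (2m)) ≤ ∑ (a x + a (2x)) ≤ 2 ∑_{j > n} a j`.
Hence `k a k ≤ 4 (1 + K) ∑_{j > n} a j`, and `k a k → 0` because the tails of `∑ a` tend to `0`.
-/

def NBVSWith (K : ℝ) (a : ℕ → ℝ) : Prop :=
  ∀ m : ℕ, 1 ≤ m → ∑ k ∈ Icc m (2 * m), |a k - a (k + 1)| ≤ K * (a m + a (2 * m))

lemma sub_le_sum_abs_sub_Ico {G : Type*} [AddCommGroup G] [LinearOrder G] [IsOrderedAddMonoid G]
    (a : ℕ → G) {m k : ℕ} (hmk : m ≤ k) :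
    a k - a m ≤ ∑ j ∈ Ico m k, |a j - a (j + 1)| := by
  rw [← sum_Ico_sub a hmk]
  exact (le_abs_self _).trans <| (abs_sum_le_sum_abs _ _).trans_eq <|
    sum_congr rfl fun _ _ => abs_sub_comm _ _

lemma exists_mem_Icc_mul_le_two_mul_sum (g : ℕ → ℝ) (hg : ∀ n, 0 ≤ g n) (k : ℕ) :
    ∃ m ∈ Icc ((k + 1) / 2) k, (k : ℝ) * g m ≤ 2 * ∑ x ∈ Icc ((k + 1) / 2) k, g x := by
  obtain ⟨m, hm, hmin⟩ := (Icc ((k + 1) / 2) k).exists_min_image g (nonempty_Icc.2 (by omega))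
  refine ⟨m, hm, ?_⟩
  have hcard : (k : ℝ) ≤ 2 * #(Icc ((k + 1) / 2) k) := by
    rw [Nat.card_Icc]; exact_mod_cast (by omega)
  have hsum := card_nsmul_le_sum _ g (g m) hmin
  rw [nsmul_eq_mul] at hsum
  nlinarith [hg m]

section Tail

variable {a : ℕ → ℝ} (hpos : ∀ n, 0 ≤ a n) (hsum : Summable a)
include hpos hsum

lemma sum_le_tsum_nat_add (N : ℕ) {s : Finset ℕ} (hs : ∀ j ∈ s, N ≤ j) :
    ∑ j ∈ s, a j ≤ ∑' j, a (N + j) := by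
  rw [← sum_preimage (N + ·) s (add_right_injective N).injOn a
    fun j hj hj' => absurd ⟨j - N, show N + (j - N) = j by have := hs j hj; omega⟩ hj']
  exact ((summable_nat_add_iff N).2 hsum |>.congr fun _ => by rw [add_comm]).sum_le_tsum _
    fun _ _ => hpos _

lemma sum_add_two_mul_le_tsum_nat_add (N : ℕ) {s : Finset ℕ} (hs : ∀ j ∈ s, N ≤ j) :
    ∑ x ∈ s, (a x + a (2 * x)) ≤ 2 * ∑' j, a (N + j) := by
  have hdouble : ∑ x ∈ s, a (2 * x) = ∑ y ∈ s.image (2 * ·), a y :=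
    (sum_image fun _ _ _ _ h => by simpa using h).symm
  have himage : ∀ y ∈ s.image (2 * ·), N ≤ y := by
    simp only [mem_image]
    rintro _ ⟨x, hx, rfl⟩
    have := hs x hx; omega
  rw [sum_add_distrib, hdouble, two_mul]
  exact add_le_add (sum_le_tsum_nat_add hpos hsum N hs)
    (sum_le_tsum_nat_add hpos hsum N himage)

end Tail

namespace NBVSWith

variable {K : ℝ} {a : ℕ → ℝ}

lemma le_mul_add_of_le_of_le (ha : NBVSWith K a) (hpos : ∀ n, 0 ≤ a n) {m k : ℕ} (hm : 1 ≤ m)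
    (hmk : m ≤ k) (hk : k ≤ 2 * m) :
    a k ≤ (1 + max K 0) * (a m + a (2 * m)) := by
  have hvar : ∑ j ∈ Ico m k, |a j - a (j + 1)| ≤ ∑ j ∈ Icc m (2 * m), |a j - a (j + 1)| :=
    sum_le_sum_of_subset_of_nonneg (fun j hj => by simp only [mem_Ico, mem_Icc] at hj ⊢; omega)
      fun _ _ _ => abs_nonneg _
  have hK : K * (a m + a (2 * m)) ≤ max K 0 * (a m + a (2 * m)) :=
    mul_le_mul_of_nonneg_right (le_max_left _ _) (add_nonneg (hpos _) (hpos _))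
  linarith [sub_le_sum_abs_sub_Ico a hmk, ha m hm, hpos (2 * m)]

theorem natCast_mul_le_tsum (ha : NBVSWith K a) (hpos : ∀ n, 0 ≤ a n) (hsum : Summable a)
    {n k : ℕ} (hk : 2 * n + 1 ≤ k) :
    (k : ℝ) * a k ≤ 4 * (1 + max K 0) * ∑' j, a (n + 1 + j) := by
  obtain ⟨m, hmI, hm⟩ := exists_mem_Icc_mul_le_two_mul_sum (fun x => a x + a (2 * x))
    (fun _ => add_nonneg (hpos _) (hpos _)) k
  obtain ⟨hm₀, hmk⟩ := mem_Icc.1 hmI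
  have hak := ha.le_mul_add_of_le_of_le hpos (by omega) hmk (by omega)
  have htail := sum_add_two_mul_le_tsum_nat_add hpos hsum (n + 1)
    (s := Icc ((k + 1) / 2) k) fun j hj => by rw [mem_Icc] at hj; omega
  have hK : 0 ≤ 1 + max K 0 := by positivity
  calc (k : ℝ) * a k ≤ (1 + max K 0) * (k * (a m + a (2 * m))) :=
        (mul_le_mul_of_nonneg_left hak (Nat.cast_nonneg k)).trans_eq (by ring)
    _ ≤ (1 + max K 0) * (2 * (2 * ∑' j, a (n + 1 + j))) :=
        mul_le_mul_of_nonneg_left (by linarith) hK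
    _ = 4 * (1 + max K 0) * ∑' j, a (n + 1 + j) := by ring

end NBVSWith

theorem nbvs_summable_decay (a : ℕ → ℝ) (hpos : ∀ n, 0 ≤ a n) (K : ℝ)
    (hNBVS : ∀ m : ℕ, 1 ≤ m →
      ∑ k ∈ Finset.Icc m (2 * m), |a k - a (k + 1)| ≤ K * (a m + a (2 * m)))
    (hsum : Summable a) :
    (∃ K' : ℝ, 0 < K' ∧ ∀ n : ℕ, 1 ≤ n → ∀ k : ℕ, 2 * n + 1 ≤ k →
      (k : ℝ) * a k ≤ K' * ∑' j : ℕ, a (n + 1 + j)) ∧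
    Tendsto (fun k : ℕ => (k : ℝ) * a k) atTop (nhds 0) := by
  have hbound {n k : ℕ} (hk : 2 * n + 1 ≤ k) :=
    NBVSWith.natCast_mul_le_tsum (K := K) hNBVS hpos hsum hk
  refine ⟨⟨_, by positivity, fun n _ k hk => hbound hk⟩, ?_⟩
  have htail : Tendsto (fun n => ∑' j, a (n + 1 + j)) atTop (nhds 0) :=
    ((tendsto_sum_nat_add a).comp (tendsto_add_atTop_nat 1)).congr fun _ =>
      tsum_congr fun _ => congrArg a (add_comm _ _)
  have hhalf : Tendsto (fun k => (k - 1) / 2) atTop atTop :=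
    (Nat.tendsto_div_const_atTop two_ne_zero).comp (tendsto_sub_atTop_nat 1)
  refine tendsto_of_tendsto_of_tendsto_of_le_of_le' tendsto_const_nhds
    (by simpa using ((htail.comp hhalf).const_mul (4 * (1 + max K 0))))
    (Eventually.of_forall fun k => mul_nonneg (Nat.cast_nonneg k) (hpos k)) ?_
  filter_upwards [eventually_ge_atTop 1] with k hk
  exact hbound (by omega)
end
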